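/- arXiv:2202.09060 — 3 statements merged into one kernel-verified Lean document; each statement's English description precedes it below -/
import Mathlib

section
/- Let λ, θ ∈ ℂ and k ≥ 1. Suppose v^1, …, v^k ∈ ℂ^{1×N} form a left Jordan chain of W at λ, i.e. v^1 ≠ 0, v^1·(W − λI) = 0 and v^j·(W − λI) = v^{j−1} for j = 2, …, k, and suppose ξ^1, …, ξ^k ∈ ℂ^{1×n} form a generalized left Jordan chain of E_λ about 𝓗(h) at θ, i.e. ξ^1·(θI − E_λ) = 0 and ξ^j·(θI − E_λ) = ξ^{j−1}·𝓗(h) for j = 2, …, k. Then the row vector η = Σ_{j=1}^{k} v^{k+1−j} ⊗ ξ^j satisfies η·Φ_s = θ·η, i.e. η is a left eigenvector of Φ_s for θ whenever it is nonzero. -/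
open Matrix
open scoped Kronecker

/-- Entrywise complexification of a real matrix. -/
noncomputable def cpx {a b : Type*} (M : Matrix a b ℝ) : Matrix a b ℂ :=
  M.map (Complex.ofReal)

/-- The matrix exponential `e^{M}`. -/
noncomputable def mexp {q : Type*} [Fintype q] [DecidableEq q]
    (M : Matrix q q ℝ) : Matrix q q ℝ :=
  NormedSpace.exp M

/-- The entrywise integral `∫₀ʰ e^{Aτ} dτ`. -/
noncomputable def intExp {q : Type*} [Fintype q] [DecidableEq q]
    (A : Matrix q q ℝ) (h : ℝ) : Matrix q q ℝ :=
  Matrix.of fun i j => ∫ τ in (0:ℝ)..h, (NormedSpace.exp (τ • A)) i j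

/-- `θ` is an eigenvalue of the complex square matrix `M`. -/
def IsEig {q : Type*} [Fintype q] [DecidableEq q] (M : Matrix q q ℂ) (θ : ℂ) : Prop :=
  (θ • (1 : Matrix q q ℂ) - M).det = 0

/-- PBH condition for a pair of complex matrices: for every `s ∈ ℂ`, the only row
vector `v` with `v (sI - M) = 0` and `v G = 0` is `v = 0`. -/
def PBH {q r : Type*} [Fintype q] [DecidableEq q] [Fintype r]
    (M : Matrix q q ℂ) (G : Matrix q r ℂ) : Prop :=
  ∀ (s : ℂ) (v : q → ℂ), v ᵥ* (s • (1 : Matrix q q ℂ) - M) = 0 → v ᵥ* G = 0 → v = 0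

/-- Controllability of a discrete-time linear system `x⁺ = F x + G u`:
every state can be steered to the origin in finitely many steps. -/
def Controllable {q r : Type*} [Fintype q] [DecidableEq q] [Fintype r]
    (F : Matrix q q ℝ) (G : Matrix q r ℝ) : Prop :=
  ∀ x : q → ℝ, ∃ (k : ℕ) (u : Fin k → r → ℝ),
    (F ^ k) *ᵥ x + ∑ j : Fin k, (F ^ (k - 1 - (j : ℕ))) *ᵥ (G *ᵥ u j) = 0

/-- `𝓑(h) = (∫₀ʰ e^{Aτ} dτ)·B`. -/
noncomputable def sampB {n p : ℕ} (A : Matrix (Fin n) (Fin n) ℝ)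
    (B : Matrix (Fin n) (Fin p) ℝ) (h : ℝ) : Matrix (Fin n) (Fin p) ℝ :=
  intExp A h * B

/-- `𝓗(h) = (∫₀ʰ e^{Aτ} dτ)·H·C`. -/
noncomputable def sampH {n m : ℕ} (A : Matrix (Fin n) (Fin n) ℝ)
    (H : Matrix (Fin n) (Fin m) ℝ) (C : Matrix (Fin m) (Fin n) ℝ) (h : ℝ) :
    Matrix (Fin n) (Fin n) ℝ :=
  intExp A h * H * C

/-- `Φ_s = I_N ⊗ e^{Ah} + W ⊗ 𝓗(h)`. -/
noncomputable def Phis {n m N : ℕ} (A : Matrix (Fin n) (Fin n) ℝ)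
    (H : Matrix (Fin n) (Fin m) ℝ) (C : Matrix (Fin m) (Fin n) ℝ)
    (W : Matrix (Fin N) (Fin N) ℝ) (h : ℝ) :
    Matrix (Fin N × Fin n) (Fin N × Fin n) ℝ :=
  (1 : Matrix (Fin N) (Fin N) ℝ) ⊗ₖ mexp (h • A) + W ⊗ₖ sampH A H C h

/-- `E_λ = e^{Ah} + λ·𝓗(h)` (complexified). -/
noncomputable def Emat {n m : ℕ} (A : Matrix (Fin n) (Fin n) ℝ)
    (H : Matrix (Fin n) (Fin m) ℝ) (C : Matrix (Fin m) (Fin n) ℝ)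
    (h : ℝ) (lam : ℂ) : Matrix (Fin n) (Fin n) ℂ :=
  cpx (mexp (h • A)) + lam • cpx (sampH A H C h)

/-!
Read the row vector `η` on `Fin N × Fin n` as the `N × n` matrix `Z = ∑ⱼ (v^{k+1-j})ᵀ ξ^j`, i.e.
`η = vec Zᵀ`. Since `Φ_s = I ⊗ E_λ + (W - λI) ⊗ 𝓗(h)`, the Kronecker rule
`vec Xᵀ (B ⊗ A) = vec (Bᵀ X A)ᵀ` turns `η Φ_s = θ η` into `Z (θI - E_λ) = (W - λI)ᵀ Z 𝓗(h)`.
This identity telescopes: right multiplication by `θI - E_λ` moves every `ξ^j` one step down its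
chain, left multiplication by `(W - λI)ᵀ` moves every `v^j` one step down its chain, and the two
shifted sums agree term by term, the end terms vanishing because `ξ^1` and `v^1` are eigenvectors.
-/

open Finset

section ChainConvolution

variable {R ι κ : Type*}

def chainConvolution [Mul R] [AddCommMonoid R] (k : ℕ) (v : ℕ → ι → R) (ξ : ℕ → κ → R) :
    Matrix ι κ R :=
  ∑ j ∈ range k, vecMulVec (v (k - 1 - j)) (ξ j)

theorem chainConvolution_mul_eq [CommSemiring R] [Fintype ι] [Fintype κ]
    (M : Matrix ι ι R) (S G : Matrix κ κ R) (k : ℕ) (v : ℕ → ι → R) (ξ : ℕ → κ → R)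
    (hv0 : v 0 ᵥ* M = 0) (hv : ∀ j, 1 ≤ j → j < k → v j ᵥ* M = v (j - 1))
    (hξ0 : ξ 0 ᵥ* S = 0) (hξ : ∀ j, 1 ≤ j → j < k → ξ j ᵥ* S = ξ (j - 1) ᵥ* G) :
    chainConvolution k v ξ * S = Mᵀ * chainConvolution k v ξ * G := by
  rcases k with _ | K
  · simp [chainConvolution]
  simp only [chainConvolution, Matrix.sum_mul, Matrix.mul_sum, vecMulVec_mul, mul_vecMulVec,
    mulVec_transpose, Nat.add_sub_cancel]
  rw [sum_range_succ', sum_range_succ, hξ0, Nat.sub_self, hv0]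
  -- `Matrix.vecMulVec_zero` only covers square outer products.
  have vecMulVec_zero' (w : ι → R) : vecMulVec w (0 : κ → R) = 0 := ext fun _ _ => mul_zero _
  rw [vecMulVec_zero', zero_vecMulVec, add_zero, add_zero]
  refine sum_congr rfl fun j hj => ?_
  have hjK := mem_range.mp hj
  rw [hξ (j + 1) (by omega) (by omega), hv (K - j) (by omega) (by omega), Nat.add_sub_cancel,
    Nat.sub_sub]

theorem vec_transpose_chainConvolution [Mul R] [AddCommMonoid R] (k : ℕ) (v : ℕ → ι → R)
    (ξ : ℕ → κ → R) :
    vec (chainConvolution k v ξ)ᵀ = fun q => ∑ j ∈ range k, v (k - 1 - j) q.1 * ξ j q.2 := by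
  ext ⟨i, a⟩
  simp [chainConvolution, vecMulVec_apply, Matrix.sum_apply]

end ChainConvolution

theorem vec_transpose_vecMul_one_kronecker_add_kronecker {R ι κ : Type*} [CommRing R]
    [Fintype ι] [Fintype κ] [DecidableEq ι] [DecidableEq κ]
    (Z : Matrix ι κ R) (M : Matrix ι ι R) (E G : Matrix κ κ R) (θ : R)
    (hZ : Z * (θ • 1 - E) = Mᵀ * Z * G) :
    vec Zᵀ ᵥ* (1 ⊗ₖ E + M ⊗ₖ G) = θ • vec Zᵀ := by
  have h : Z * E + Mᵀ * Z * G = θ • Z := by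
    rw [← hZ, Matrix.mul_sub, Matrix.mul_smul, Matrix.mul_one]
    abel
  rw [vecMul_add, vec_vecMul_kronecker, vec_vecMul_kronecker, ← vec_add, ← vec_smul]
  congr 1
  simpa [transpose_mul, Matrix.mul_assoc] using congrArg transpose h

theorem cpx_Phis {n m N : ℕ} (A : Matrix (Fin n) (Fin n) ℝ)
    (H : Matrix (Fin n) (Fin m) ℝ) (C : Matrix (Fin m) (Fin n) ℝ)
    (W : Matrix (Fin N) (Fin N) ℝ) (h : ℝ) (lam : ℂ) :
    cpx (Phis A H C W h) =
      1 ⊗ₖ Emat A H C h lam + (cpx W - lam • 1) ⊗ₖ cpx (sampH A H C h) := by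
  ext ⟨i, a⟩ ⟨j, b⟩
  simp [cpx, Phis, Emat, one_apply, apply_ite Complex.ofReal]
  split_ifs <;> ring

theorem stmt1_general
    (n m N : ℕ)
    (h : ℝ)
    (A : Matrix (Fin n) (Fin n) ℝ)
    (C : Matrix (Fin m) (Fin n) ℝ) (H : Matrix (Fin n) (Fin m) ℝ)
    (W : Matrix (Fin N) (Fin N) ℝ)
    (lam θ : ℂ) (k : ℕ)
    (v : ℕ → Fin N → ℂ) (ξ : ℕ → Fin n → ℂ)
    (hv0 : v 0 ᵥ* (cpx W - lam • (1 : Matrix (Fin N) (Fin N) ℂ)) = 0)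
    (hvj : ∀ j, 1 ≤ j → j < k →
      v j ᵥ* (cpx W - lam • (1 : Matrix (Fin N) (Fin N) ℂ)) = v (j - 1))
    (hx0 : ξ 0 ᵥ* (θ • (1 : Matrix (Fin n) (Fin n) ℂ) - Emat A H C h lam) = 0)
    (hxj : ∀ j, 1 ≤ j → j < k →
      ξ j ᵥ* (θ • (1 : Matrix (Fin n) (Fin n) ℂ) - Emat A H C h lam) =
        ξ (j - 1) ᵥ* cpx (sampH A H C h)) :
    (fun q : Fin N × Fin n => ∑ j ∈ Finset.range k, v (k - 1 - j) q.1 * ξ j q.2) ᵥ*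
        cpx (Phis A H C W h) =
      θ • fun q : Fin N × Fin n => ∑ j ∈ Finset.range k, v (k - 1 - j) q.1 * ξ j q.2 := by
  rw [← vec_transpose_chainConvolution, cpx_Phis _ _ _ _ _ lam]
  exact vec_transpose_vecMul_one_kronecker_add_kronecker _ _ _ _ θ
    (chainConvolution_mul_eq _ _ _ k v ξ hv0 hvj hx0 hxj)

theorem stmt1
    (n m p N : ℕ) (hn : 0 < n) (hm : 0 < m) (hp : 0 < p) (hN : 0 < N)
    (h : ℝ) (hh : 0 < h)
    (A : Matrix (Fin n) (Fin n) ℝ) (B : Matrix (Fin n) (Fin p) ℝ)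
    (C : Matrix (Fin m) (Fin n) ℝ) (H : Matrix (Fin n) (Fin m) ℝ)
    (W : Matrix (Fin N) (Fin N) ℝ)
    (lam θ : ℂ) (k : ℕ) (hk : 1 ≤ k)
    (v : ℕ → Fin N → ℂ) (ξ : ℕ → Fin n → ℂ)
    (hv1 : v 0 ≠ 0)
    (hv0 : v 0 ᵥ* (cpx W - lam • (1 : Matrix (Fin N) (Fin N) ℂ)) = 0)
    (hvj : ∀ j, 1 ≤ j → j < k →
      v j ᵥ* (cpx W - lam • (1 : Matrix (Fin N) (Fin N) ℂ)) = v (j - 1))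
    (hx0 : ξ 0 ᵥ* (θ • (1 : Matrix (Fin n) (Fin n) ℂ) - Emat A H C h lam) = 0)
    (hxj : ∀ j, 1 ≤ j → j < k →
      ξ j ᵥ* (θ • (1 : Matrix (Fin n) (Fin n) ℂ) - Emat A H C h lam) =
        ξ (j - 1) ᵥ* cpx (sampH A H C h)) :
    (fun q : Fin N × Fin n => ∑ j ∈ Finset.range k, v (k - 1 - j) q.1 * ξ j q.2) ᵥ*
        cpx (Phis A H C W h) =
      θ • fun q : Fin N × Fin n => ∑ j ∈ Finset.range k, v (k - 1 - j) q.1 * ξ j q.2 :=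
  stmt1_general n m N h A C H W lam θ k v ξ hv0 hvj hx0 hxj
end

section
/- Assume that for every complex eigenvalue λ of W the matrix E_λ = e^{Ah} + λ·𝓗(h) is invertible. If the networked sampled-data system (Φ_s, Ψ_s) is controllable, then the pair (W, Δ) satisfies the PBH condition and, for every complex eigenvalue λ of W, the pair (E_λ, 𝓑(h)) satisfies the PBH condition. -/
open Matrix
open scoped Kronecker

/-! If `v` is a left eigenvector of `W` for `λ` and `w` one of `E_λ` for `μ`, then `v ⊗ w` is a
left eigenvector of `Φ_s` for `μ`, and `(v ⊗ w)(Δ ⊗ 𝓑(h)) = (v Δ) ⊗ (w 𝓑(h))`. Pairing a left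
eigenvector `z` for an eigenvalue `μ ≠ 0` with the steering identity
`F^k x + ∑ F^(k-1-j) G u_j = 0` gives `μ^k (z ⬝ x) = 0` as soon as `z G = 0`, so controllability
leaves no such `z` but `0`; and `μ ≠ 0` because `E_λ` is invertible. A vector violating either PBH
condition is a left eigenvector, which is completed to `v ⊗ w` by an eigenvector of the other
factor: of `E_s` for `(W, Δ)`, of `W` for `(E_λ, 𝓑(h))`. -/

lemma cpx_pow {q : Type*} [Fintype q] [DecidableEq q] (M : Matrix q q ℝ) (k : ℕ) :
    cpx (M ^ k) = cpx M ^ k :=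
  Matrix.map_pow M Complex.ofRealHom k

lemma cpx_one {q : Type*} [DecidableEq q] : cpx (1 : Matrix q q ℝ) = 1 :=
  Matrix.map_one _ Complex.ofReal_zero Complex.ofReal_one

lemma cpx_add {a b : Type*} (M K : Matrix a b ℝ) : cpx (M + K) = cpx M + cpx K :=
  Matrix.map_add _ Complex.ofReal_add M K

lemma cpx_kronecker {a b c d : Type*} (M : Matrix a b ℝ) (K : Matrix c d ℝ) :
    cpx (M ⊗ₖ K) = cpx M ⊗ₖ cpx K := by
  ext i j
  simp [cpx, kroneckerMap_apply]

lemma dotProduct_ofReal_mulVec {a b : Type*} [Fintype a] [Fintype b] (z : a → ℂ)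
    (M : Matrix a b ℝ) (x : b → ℝ) :
    z ⬝ᵥ (Complex.ofReal ∘ (M *ᵥ x)) = (z ᵥ* cpx M) ⬝ᵥ (Complex.ofReal ∘ x) := by
  rw [← dotProduct_mulVec]
  congr 1
  funext i
  exact Complex.ofRealHom.map_mulVec M x i

section LeftEigenvectors

variable {q : Type*} [Fintype q] [DecidableEq q]

lemma vecMul_smul_one_sub_eq_zero_iff {M : Matrix q q ℂ} {s : ℂ} {v : q → ℂ} :
    v ᵥ* (s • (1 : Matrix q q ℂ) - M) = 0 ↔ v ᵥ* M = s • v := by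
  rw [vecMul_sub, vecMul_smul, vecMul_one, sub_eq_zero, eq_comm]

lemma isEig_iff_exists_vecMul_eq_smul {M : Matrix q q ℂ} {θ : ℂ} :
    IsEig M θ ↔ ∃ v ≠ 0, v ᵥ* M = θ • v := by
  simp only [IsEig, ← exists_vecMul_eq_zero_iff, vecMul_smul_one_sub_eq_zero_iff]

lemma exists_vecMul_eq_smul [Nonempty q] (M : Matrix q q ℂ) :
    ∃ μ : ℂ, ∃ w ≠ 0, w ᵥ* M = μ • w := by
  obtain ⟨μ, hμ⟩ := Module.End.exists_eigenvalue (toLin' Mᵀ)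
  obtain ⟨w, hw⟩ := hμ.exists_hasEigenvector
  refine ⟨μ, w, hw.2, ?_⟩
  rw [← mulVec_transpose, ← toLin'_apply]
  exact hw.apply_eq_smul

lemma ne_zero_of_vecMul_eq_smul {E : Matrix q q ℂ} (hE : IsUnit E) {w : q → ℂ} (hw : w ≠ 0)
    {μ : ℂ} (hwE : w ᵥ* E = μ • w) : μ ≠ 0 := by
  rintro rfl
  refine ((isUnit_iff_isUnit_det E).mp hE).ne_zero (exists_vecMul_eq_zero_iff.mp ⟨w, hw, ?_⟩)
  rw [hwE, zero_smul]

end LeftEigenvectors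

lemma Controllable.eq_zero_of_vecMul_eq_smul {q r : Type*} [Fintype q] [DecidableEq q]
    [Fintype r] {F : Matrix q q ℝ} {G : Matrix q r ℝ} (hc : Controllable F G) {z : q → ℂ}
    {μ : ℂ} (hμ : μ ≠ 0) (hzF : z ᵥ* cpx F = μ • z) (hzG : z ᵥ* cpx G = 0) : z = 0 := by
  let φ : (q → ℝ) →+ ℂ :=
    { toFun := fun x => z ⬝ᵥ (Complex.ofReal ∘ x)
      map_zero' := by simp [Function.comp_def]
      map_add' := fun x y => by rw [← dotProduct_add]; congr 1; ext i; simp }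
  have hφF (k : ℕ) (x : q → ℝ) : φ (F ^ k *ᵥ x) = μ ^ k * φ x := by
    have hpow : z ᵥ* cpx F ^ k = μ ^ k • z := by
      induction k with
      | zero => simp
      | succ k ih => rw [pow_succ, ← vecMul_vecMul, ih, smul_vecMul, hzF, smul_smul, pow_succ]
    simp only [φ, AddMonoidHom.coe_mk, ZeroHom.coe_mk, dotProduct_ofReal_mulVec, cpx_pow,
      hpow, smul_dotProduct, smul_eq_mul]
  have hφG (u : r → ℝ) : φ (G *ᵥ u) = 0 := by
    simp only [φ, AddMonoidHom.coe_mk, ZeroHom.coe_mk, dotProduct_ofReal_mulVec, hzG,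
      zero_dotProduct]
  have hφ (x : q → ℝ) : φ x = 0 := by
    obtain ⟨k, u, hku⟩ := hc x
    have h0 := congrArg φ hku
    simp only [map_add, map_sum, map_zero, hφF, hφG, mul_zero, Finset.sum_const_zero,
      add_zero] at h0
    exact (mul_eq_zero.mp h0).resolve_left (pow_ne_zero k hμ)
  funext i
  simpa [φ, dotProduct, Pi.single_apply, apply_ite] using hφ (Pi.single i 1)

section KroneckerVectors

def kronVec {a b R : Type*} [Mul R] (v : a → R) (w : b → R) : a × b → R :=
  fun i => v i.1 * w i.2

variable {a b c d R : Type*}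

lemma kronVec_ne_zero [MulZeroClass R] [NoZeroDivisors R] {v : a → R} {w : b → R}
    (hv : v ≠ 0) (hw : w ≠ 0) : kronVec v w ≠ 0 := by
  obtain ⟨i, hi⟩ := Function.ne_iff.mp hv
  obtain ⟨j, hj⟩ := Function.ne_iff.mp hw
  exact Function.ne_iff.mpr ⟨(i, j), mul_ne_zero hi hj⟩

lemma kronVec_vecMul_kronecker [Fintype a] [Fintype b] [CommSemiring R] (v : a → R)
    (w : b → R) (M : Matrix a c R) (K : Matrix b d R) :
    kronVec v w ᵥ* (M ⊗ₖ K) = kronVec (v ᵥ* M) (w ᵥ* K) := by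
  funext i
  simp only [kronVec, vecMul, dotProduct, kroneckerMap_apply, Fintype.sum_prod_type,
    Finset.sum_mul, Finset.mul_sum]
  rw [Finset.sum_comm]
  exact Finset.sum_congr rfl fun x _ => Finset.sum_congr rfl fun y _ => by ring

lemma kronVec_vecMul_one_kronecker_add [Fintype a] [DecidableEq a] [Fintype b] [CommRing R]
    {v : a → R} {w : b → R} {W : Matrix a a R} {P Q : Matrix b b R} {lam μ : R}
    (hv : v ᵥ* W = lam • v) (hw : w ᵥ* (P + lam • Q) = μ • w) :
    kronVec v w ᵥ* (1 ⊗ₖ P + W ⊗ₖ Q) = μ • kronVec v w := by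
  rw [vecMul_add, kronVec_vecMul_kronecker, kronVec_vecMul_kronecker, vecMul_one, hv]
  funext i
  have hwi := congrFun hw i.2
  simp only [vecMul_add, vecMul_smul, Pi.add_apply, Pi.smul_apply, smul_eq_mul] at hwi
  simp only [kronVec, Pi.add_apply, Pi.smul_apply, smul_eq_mul]
  linear_combination v i.1 * hwi

end KroneckerVectors

lemma Controllable.kronVec_eq_zero {N N' n p : Type*} [Fintype N] [DecidableEq N] [Fintype N']
    [Fintype n] [DecidableEq n] [Fintype p] {W : Matrix N N ℝ} {D : Matrix N N' ℝ}
    {P Q : Matrix n n ℝ} {R : Matrix n p ℝ} (hc : Controllable (1 ⊗ₖ P + W ⊗ₖ Q) (D ⊗ₖ R))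
    {v : N → ℂ} {w : n → ℂ} {lam μ : ℂ} (hμ : μ ≠ 0) (hv : v ᵥ* cpx W = lam • v)
    (hw : w ᵥ* (cpx P + lam • cpx Q) = μ • w) (hDR : v ᵥ* cpx D = 0 ∨ w ᵥ* cpx R = 0) :
    kronVec v w = 0 := by
  refine hc.eq_zero_of_vecMul_eq_smul hμ ?_ ?_
  · rw [cpx_add, cpx_kronecker, cpx_kronecker, cpx_one]
    exact kronVec_vecMul_one_kronecker_add hv hw
  · rw [cpx_kronecker, kronVec_vecMul_kronecker]
    rcases hDR with h | h <;> funext i <;> simp [kronVec, h]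

theorem stmt6_general
    (n m p N : ℕ) (hn : 0 < n)
    (h : ℝ)
    (A : Matrix (Fin n) (Fin n) ℝ) (B : Matrix (Fin n) (Fin p) ℝ)
    (C : Matrix (Fin m) (Fin n) ℝ) (H : Matrix (Fin n) (Fin m) ℝ)
    (W : Matrix (Fin N) (Fin N) ℝ)
    (δ : Fin N → ℝ)
    (hE : ∀ lam : ℂ, IsEig (cpx W) lam → IsUnit (Emat A H C h lam))
    (hc : Controllable (Phis A H C W h) (Matrix.diagonal δ ⊗ₖ sampB A B h)) :
    PBH (cpx W) (cpx (Matrix.diagonal δ)) ∧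
      ∀ lam : ℂ, IsEig (cpx W) lam → PBH (Emat A H C h lam) (cpx (sampB A B h)) := by
  have key {lam μ : ℂ} {v : Fin N → ℂ} {w : Fin n → ℂ} (hv : v ≠ 0) (hw : w ≠ 0)
      (hvW : v ᵥ* cpx W = lam • v) (hwE : w ᵥ* Emat A H C h lam = μ • w)
      (hzero : v ᵥ* cpx (diagonal δ) = 0 ∨ w ᵥ* cpx (sampB A B h) = 0) : False :=
    have hlam : IsEig (cpx W) lam := isEig_iff_exists_vecMul_eq_smul.mpr ⟨v, hv, hvW⟩
    kronVec_ne_zero hv hw <| Controllable.kronVec_eq_zero hc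
      (ne_zero_of_vecMul_eq_smul (hE lam hlam) hw hwE) hvW hwE hzero
  refine ⟨fun s v hvW hvΔ => by_contra fun hv => ?_,
    fun lam hlam s w hwE hwB => by_contra fun hw => ?_⟩
  · have : Nonempty (Fin n) := ⟨⟨0, hn⟩⟩
    obtain ⟨μ, w, hw, hwE⟩ := exists_vecMul_eq_smul (Emat A H C h s)
    exact key hv hw (vecMul_smul_one_sub_eq_zero_iff.mp hvW) hwE (.inl hvΔ)
  · obtain ⟨v, hv, hvW⟩ := isEig_iff_exists_vecMul_eq_smul.mp hlam
    exact key hv hw hvW (vecMul_smul_one_sub_eq_zero_iff.mp hwE) (.inr hwB)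

theorem stmt6
    (n m p N : ℕ) (hn : 0 < n) (hm : 0 < m) (hp : 0 < p) (hN : 0 < N)
    (h : ℝ) (hh : 0 < h)
    (A : Matrix (Fin n) (Fin n) ℝ) (B : Matrix (Fin n) (Fin p) ℝ)
    (C : Matrix (Fin m) (Fin n) ℝ) (H : Matrix (Fin n) (Fin m) ℝ)
    (W : Matrix (Fin N) (Fin N) ℝ)
    (δ : Fin N → ℝ) (hδ : ∀ i, δ i = 0 ∨ δ i = 1)
    (hE : ∀ lam : ℂ, IsEig (cpx W) lam → IsUnit (Emat A H C h lam))
    (hc : Controllable (Phis A H C W h) (Matrix.diagonal δ ⊗ₖ sampB A B h)) :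
    PBH (cpx W) (cpx (Matrix.diagonal δ)) ∧
      ∀ lam : ℂ, IsEig (cpx W) lam → PBH (Emat A H C h lam) (cpx (sampB A B h)) :=
  stmt6_general n m p N hn h A B C H W δ hE hc
end

section
/- Let N ≥ 2 and let W be the real N×N matrix of a directed circle: W(1, N) = w_{1,N} ≠ 0, W(i, i−1) = w_{i,i−1} ≠ 0 for i = 2, …, N, and all other entries zero; then W has N pairwise distinct complex eigenvalues, each with one-dimensional left eigenspace. Let Δ_1 = diag(1, 0, …, 0). Assume: (2) for every complex eigenvalue λ of W, the pair (E_λ, 𝓑(h)) satisfies the PBH condition; (3) for every θ ∈ ℂ, every choice of nonzero left eigenvectors v_λ ∈ ℂ^{1×N} of W (one for each complex eigenvalue λ of W), and every family of row vectors ξ_λ ∈ ℂ^{1×n} with ξ_λ·(θI − E_λ) = 0 for every eigenvalue λ and not all ξ_λ zero, one has (Σ_λ v_λ ⊗ ξ_λ)·(Δ_1 ⊗ 𝓑(h)) ≠ 0. Then the networked sampled-data system (Φ_s, Δ_1 ⊗ 𝓑(h)) is controllable. -/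
open Matrix
open scoped Kronecker

/-!
The left eigenvectors of the weighted directed cycle `W` are explicit,
`v_μ(j) = μ^j / (w_0 ⋯ w_{j-1})`, with `μ` running over the `N` distinct `N`-th roots of
`w_0 ⋯ w_{N-1}`; so they form a basis of `ℂ^N` and every eigenspace is a line. Writing a PBH
witness of `(Φ_s, Ψ_s)` in this basis, `V = Σ_μ v_μ ⊗ ξ_μ`, the equation `V (sI - Φ_s) = 0`
decouples into `ξ_μ (sI - E_μ) = 0`, so condition (3) rules out `V Ψ_s = 0` unless `V = 0`.
Finally PBH for the complexification gives controllability: the covectors annihilating every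
`Φ^i Ψ` form a subspace invariant under right multiplication by `Φ`, so if nonzero it contains a
left eigenvector of `Φ` annihilating `Ψ`; by Cayley–Hamilton the powers `i < dim` already
suffice, so the reachability matrix has full row rank.
-/

open Polynomial

theorem Matrix.mulVec_surjective_of_vecMul_injective {K m n : Type*} [Field K] [Fintype m]
    [Fintype n] {M : Matrix m n K} (hM : Function.Injective M.vecMul) :
    Function.Surjective M.mulVec := by
  have hrank : M.rank = Fintype.card m :=
    (vecMul_injective_iff.mp hM).rank_matrix
  rw [← coe_mulVecLin, ← LinearMap.range_eq_top]
  apply Submodule.eq_top_of_finrank_eq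
  rw [← rank, hrank, Module.finrank_fintype_fun_eq_card]

theorem Matrix.vecMul_pow_mul_eq_zero_of_lt_card {R q r : Type*} [CommRing R]
    [Fintype q] [DecidableEq q] {F : Matrix q q R} {G : Matrix q r R} {x : q → R}
    (hx : ∀ i < Fintype.card q, x ᵥ* (F ^ i * G) = 0) (i : ℕ) : x ᵥ* (F ^ i * G) = 0 := by
  nontriviality R
  rcases isEmpty_or_nonempty q with hq | hq
  · rw [Subsingleton.elim x 0, zero_vecMul]
  have hdeg : (X ^ i %ₘ F.charpoly).natDegree < Fintype.card q := by
    rw [← F.charpoly_natDegree_eq_dim]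
    refine natDegree_modByMonic_lt _ F.charpoly_monic fun h1 => Fintype.card_ne_zero (α := q) ?_
    simpa [h1] using F.charpoly_natDegree_eq_dim.symm
  rw [pow_eq_aeval_mod_charpoly, aeval_eq_sum_range' hdeg, Matrix.sum_mul, vecMul_sum]
  refine Finset.sum_eq_zero fun j hj => ?_
  rw [Matrix.smul_mul, vecMul_smul, hx j (Finset.mem_range.mp hj), smul_zero]

theorem Matrix.isRoot_charpoly_iff_exists_vecMul_eq_smul {K n : Type*} [Field K] [Fintype n]
    [DecidableEq n] (M : Matrix n n K) (μ : K) :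
    M.charpoly.IsRoot μ ↔ ∃ v ≠ 0, v ᵥ* M = μ • v := by
  rw [IsRoot, eval_charpoly, ← exists_vecMul_eq_zero_iff]
  refine exists_congr fun v => and_congr_right fun _ => ?_
  have hμ : v ᵥ* scalar n μ = μ • v := by ext; simp [mul_comm]
  rw [vecMul_sub, hμ, sub_eq_zero, eq_comm]

theorem Complex.card_nthRootsFinset {n : ℕ} (hn : n ≠ 0) {a : ℂ} (ha : a ≠ 0) :
    (nthRootsFinset n a).card = n := by
  classical
  have hζ := Complex.isPrimitiveRoot_exp n hn
  rw [nthRootsFinset_def, Multiset.toFinset_card_of_nodup (hζ.nthRoots_nodup ha),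
    hζ.card_nthRoots, if_pos (IsAlgClosed.exists_pow_nat_eq a (Nat.pos_of_ne_zero hn))]

theorem Fin.partialProd_ne_zero {M₀ : Type*} [MonoidWithZero M₀] [NoZeroDivisors M₀]
    [Nontrivial M₀] {n : ℕ} {f : Fin n → M₀} (hf : ∀ j, f j ≠ 0) (i : Fin (n + 1)) :
    partialProd f i ≠ 0 := by
  induction i using Fin.induction with
  | zero => simp
  | succ i ih => rw [partialProd_succ]; exact mul_ne_zero ih (hf i)

theorem Fin.partialProd_last {M : Type*} [CommMonoid M] {n : ℕ} (f : Fin n → M) :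
    partialProd f (last n) = ∏ i, f i := by
  rw [partialProd, val_last, List.take_of_length_le (by simp), List.prod_ofFn]

theorem Controllable.of_vecMul_pow_mul_eq_zero {q r : Type*} [Fintype q] [DecidableEq q]
    [Fintype r] {F : Matrix q q ℝ} {G : Matrix q r ℝ}
    (hFG : ∀ x : q → ℝ, (∀ i, x ᵥ* (F ^ i * G) = 0) → x = 0) : Controllable F G := by
  set d := Fintype.card q
  -- `reach *ᵥ u` is the state reached from `0` in `d` steps under the inputs `j ↦ u (j, ·)`
  let reach : Matrix q (Fin d × r) ℝ := of fun a jb => (F ^ (d - 1 - jb.1) * G) a jb.2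
  have hinj : Function.Injective reach.vecMul := by
    rw [← coe_vecMulLinear, ← LinearMap.ker_eq_bot, LinearMap.ker_eq_bot']
    intro x hx
    refine hFG x (vecMul_pow_mul_eq_zero_of_lt_card fun i hi => funext fun b => ?_)
    have hcol : (x ᵥ* (F ^ (d - 1 - (d - 1 - i)) * G)) b = 0 :=
      congrFun hx (⟨d - 1 - i, by omega⟩, b)
    rwa [show d - 1 - (d - 1 - i) = i by omega] at hcol
  intro x
  obtain ⟨u, hu⟩ := mulVec_surjective_of_vecMul_injective hinj (-(F ^ d *ᵥ x))
  refine ⟨d, fun j b => u (j, b), ?_⟩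
  have hsum : ∑ j : Fin d, F ^ (d - 1 - j) *ᵥ (G *ᵥ fun b => u (j, b)) = reach *ᵥ u := by
    ext a
    simp [reach, mulVec_mulVec, mulVec, dotProduct, Fintype.sum_prod_type]
  rw [hsum, hu, add_neg_cancel]

theorem PBH.eq_zero_of_vecMul_pow_mul_eq_zero {q r : Type*} [Fintype q] [DecidableEq q]
    [Fintype r] {M : Matrix q q ℂ} {G : Matrix q r ℂ} (hMG : PBH M G) {x : q → ℂ}
    (hx : ∀ i, x ᵥ* (M ^ i * G) = 0) : x = 0 := by
  let U : Submodule ℂ (q → ℂ) := ⨅ i : ℕ, LinearMap.ker (M ^ i * G).vecMulLinear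
  have hmem : ∀ y, y ∈ U ↔ ∀ i, y ᵥ* (M ^ i * G) = 0 := fun y => by
    simp [U, Submodule.mem_iInf]
  have hMU : ∀ y ∈ U, M.vecMulLinear y ∈ U := fun y hy => (hmem _).2 fun i => by
    rw [coe_vecMulLinear, vecMul_vecMul, ← Matrix.mul_assoc, ← pow_succ']
    exact (hmem y).1 hy (i + 1)
  by_contra hx0
  have : Nontrivial U := ⟨⟨⟨x, (hmem x).2 hx⟩, 0, fun h => hx0 (congrArg Subtype.val h)⟩⟩
  -- the restriction of `y ↦ y M` to `U` has an eigenvector, which PBH forces to vanish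
  obtain ⟨s, hs⟩ := Module.End.exists_eigenvalue (M.vecMulLinear.restrict hMU)
  obtain ⟨⟨y, hyU⟩, hy⟩ := hs.exists_hasEigenvector
  have hyM : y ᵥ* M = s • y := congrArg Subtype.val hy.apply_eq_smul
  have hyG : y ᵥ* G = 0 := by simpa using (hmem y).1 hyU 0
  refine hy.2 (Subtype.ext (hMG s y ?_ hyG))
  rw [vecMul_sub, vecMul_smul, vecMul_one, hyM, sub_self]

theorem Controllable.of_pbh_cpx {q r : Type*} [Fintype q] [DecidableEq q] [Fintype r]
    {F : Matrix q q ℝ} {G : Matrix q r ℝ} (hFG : PBH (cpx F) (cpx G)) : Controllable F G := by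
  refine of_vecMul_pow_mul_eq_zero fun x hx => ?_
  have hxc : (Complex.ofRealHom ∘ x) = 0 := hFG.eq_zero_of_vecMul_pow_mul_eq_zero fun i => by
    ext b
    change (Complex.ofRealHom ∘ x ᵥ* (F.map Complex.ofRealHom ^ i * G.map Complex.ofRealHom)) b
      = 0
    rw [← Matrix.map_pow, ← Matrix.map_mul, ← RingHom.map_vecMul, hx i, Pi.zero_apply, map_zero]
  ext a
  simpa using congrFun hxc a

section DirectedCycle

variable {K : Type*} [Field K] {N : ℕ} {c : Fin (N + 1) → K}

def cycleMatrix (c : Fin (N + 1) → K) : Matrix (Fin (N + 1)) (Fin (N + 1)) K :=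
  of fun i j => if i = j + 1 then c j else 0

def cycleEigvec (c : Fin (N + 1) → K) (μ : K) (j : Fin (N + 1)) : K :=
  μ ^ (j : ℕ) / Fin.partialProd c j.castSucc

theorem vecMul_cycleMatrix_eq_smul_iff {u : Fin (N + 1) → K} {μ : K} :
    u ᵥ* cycleMatrix c = μ • u ↔
      (∀ j : Fin N, u j.succ * c j.castSucc = μ * u j.castSucc) ∧
        u 0 * c (Fin.last N) = μ * u (Fin.last N) := by
  have happly : ∀ j, (u ᵥ* cycleMatrix c) j = u (j + 1) * c j := fun j => by
    simp [cycleMatrix, vecMul, dotProduct]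
  rw [funext_iff, Fin.forall_fin_succ']
  simp only [happly, Pi.smul_apply, smul_eq_mul, Fin.coeSucc_eq_succ, Fin.last_add_one]

@[simp]
theorem cycleEigvec_zero (μ : K) : cycleEigvec c μ 0 = 1 := by
  simp [cycleEigvec]

theorem cycleEigvec_ne_zero (μ : K) : cycleEigvec c μ ≠ 0 :=
  fun h => by simpa using congrFun h 0

theorem cycleEigvec_succ (hc : ∀ j, c j ≠ 0) (μ : K) (j : Fin N) :
    cycleEigvec c μ j.succ * c j.castSucc = μ * cycleEigvec c μ j.castSucc := by
  have hprod := Fin.partialProd_ne_zero hc j.castSucc.castSucc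
  have hcj := hc j.castSucc
  simp only [cycleEigvec, ← Fin.succ_castSucc, Fin.partialProd_succ, Fin.val_succ,
    Fin.val_castSucc]
  field_simp
  ring

theorem eq_mul_cycleEigvec_last_iff (hc : ∀ j, c j ≠ 0) (μ : K) :
    c (Fin.last N) = μ * cycleEigvec c μ (Fin.last N) ↔ μ ^ (N + 1) = ∏ i, c i := by
  have hprod := Fin.partialProd_ne_zero hc (Fin.last N).castSucc
  rw [← Fin.partialProd_last, ← Fin.succ_last, Fin.partialProd_succ, cycleEigvec, Fin.val_last,
    mul_div_assoc', eq_div_iff hprod, pow_succ', mul_comm (c _)]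
  exact eq_comm

theorem cycleEigvec_vecMul (hc : ∀ j, c j ≠ 0) {μ : K} (hμ : μ ^ (N + 1) = ∏ i, c i) :
    cycleEigvec c μ ᵥ* cycleMatrix c = μ • cycleEigvec c μ := by
  rw [vecMul_cycleMatrix_eq_smul_iff, cycleEigvec_zero, one_mul, eq_mul_cycleEigvec_last_iff hc]
  exact ⟨cycleEigvec_succ hc μ, hμ⟩

theorem eq_smul_cycleEigvec (hc : ∀ j, c j ≠ 0) {μ : K} {u : Fin (N + 1) → K}
    (hu : u ᵥ* cycleMatrix c = μ • u) : u = u 0 • cycleEigvec c μ := by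
  funext j
  induction j using Fin.induction with
  | zero => simp
  | succ j ih =>
    refine mul_right_cancel₀ (hc j.castSucc) ?_
    rw [(vecMul_cycleMatrix_eq_smul_iff.mp hu).1 j, ih]
    simp only [Pi.smul_apply, smul_eq_mul, mul_assoc, cycleEigvec_succ hc]
    ring

theorem pow_eq_prod_of_vecMul_cycleMatrix (hc : ∀ j, c j ≠ 0) {μ : K} {u : Fin (N + 1) → K}
    (hu0 : u ≠ 0) (hu : u ᵥ* cycleMatrix c = μ • u) : μ ^ (N + 1) = ∏ i, c i := by
  have hu' := eq_smul_cycleEigvec hc hu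
  have h0 : u 0 ≠ 0 := fun h => hu0 (by rw [hu', h, zero_smul])
  rw [← eq_mul_cycleEigvec_last_iff hc]
  refine mul_left_cancel₀ h0 ?_
  have hlast := (vecMul_cycleMatrix_eq_smul_iff.mp hu).2
  rw [hu'] at hlast
  simpa [mul_left_comm μ] using hlast

theorem isRoot_charpoly_cycleMatrix_iff (hc : ∀ j, c j ≠ 0) (μ : K) :
    (cycleMatrix c).charpoly.IsRoot μ ↔ μ ^ (N + 1) = ∏ i, c i := by
  rw [isRoot_charpoly_iff_exists_vecMul_eq_smul]
  refine ⟨fun ⟨u, hu0, hu⟩ => pow_eq_prod_of_vecMul_cycleMatrix hc hu0 hu, fun hμ => ?_⟩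
  exact ⟨cycleEigvec c μ, cycleEigvec_ne_zero μ, cycleEigvec_vecMul hc hμ⟩

theorem exists_eq_smul_of_vecMul_cycleMatrix (hc : ∀ j, c j ≠ 0) {μ : K}
    {u v : Fin (N + 1) → K} (hu0 : u ≠ 0) (hu : u ᵥ* cycleMatrix c = μ • u)
    (hv : v ᵥ* cycleMatrix c = μ • v) : ∃ a : K, v = a • u := by
  have hu' := eq_smul_cycleEigvec hc hu
  have h0 : u 0 ≠ 0 := fun h => hu0 (by rw [hu', h, zero_smul])
  refine ⟨v 0 / u 0, ?_⟩
  calc v = v 0 • cycleEigvec c μ := eq_smul_cycleEigvec hc hv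
    _ = (v 0 / u 0) • (u 0 • cycleEigvec c μ) := by rw [smul_smul, div_mul_cancel₀ _ h0]
    _ = (v 0 / u 0) • u := by rw [← hu']

end DirectedCycle

theorem roots_charpoly_cycleMatrix {N : ℕ} {c : Fin (N + 1) → ℂ} (hc : ∀ j, c j ≠ 0) :
    (cycleMatrix c).charpoly.roots.toFinset = nthRootsFinset (N + 1) (∏ i, c i) := by
  ext μ
  rw [Multiset.mem_toFinset, mem_roots (cycleMatrix c).charpoly_monic.ne_zero,
    isRoot_charpoly_cycleMatrix_iff hc, mem_nthRootsFinset N.succ_pos]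

section NetworkPBH

variable {α ι κ R : Type*}

def tensorSum [CommSemiring R] (S : Finset α) (v : α → ι → R) (ξ : α → κ → R) : ι × κ → R :=
  fun q => ∑ a ∈ S, v a q.1 * ξ a q.2

theorem tensorSum_vecMul_kronecker {ι' κ' : Type*} [CommSemiring R] [Fintype ι] [Fintype κ]
    (S : Finset α) (v : α → ι → R) (ξ : α → κ → R) (M : Matrix ι ι' R) (L : Matrix κ κ' R) :
    tensorSum S v ξ ᵥ* (M ⊗ₖ L) = tensorSum S (fun a => v a ᵥ* M) (fun a => ξ a ᵥ* L) := by
  ext ⟨j, l⟩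
  simp only [tensorSum, vecMul, dotProduct, kroneckerMap_apply, Fintype.sum_prod_type,
    Finset.sum_mul, Finset.mul_sum]
  rw [Finset.sum_congr rfl fun _ _ => Finset.sum_comm, Finset.sum_comm]
  refine Finset.sum_congr rfl fun a _ => ?_
  rw [Finset.sum_comm]
  exact Finset.sum_congr rfl fun _ _ => Finset.sum_congr rfl fun _ _ => by ring

theorem tensorSum_vecMul_sub_kronecker [CommRing R] [Fintype ι] [DecidableEq ι] [Fintype κ]
    [DecidableEq κ] {W : Matrix ι ι R} {S : Finset R} {v : R → ι → R}
    (hv : ∀ a ∈ S, v a ᵥ* W = a • v a) (ξ : R → κ → R) (s : R) (E H : Matrix κ κ R) :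
    tensorSum S v ξ ᵥ* (s • 1 - ((1 : Matrix ι ι R) ⊗ₖ E + W ⊗ₖ H)) =
      tensorSum S v (fun a => ξ a ᵥ* (s • 1 - (E + a • H))) := by
  have hsplit : s • 1 - ((1 : Matrix ι ι R) ⊗ₖ E + W ⊗ₖ H) = 1 ⊗ₖ (s • 1 - E) + W ⊗ₖ (-H) := by
    ext ⟨i, k⟩ ⟨j, l⟩
    by_cases hij : i = j <;> by_cases hkl : k = l <;> simp [one_apply, hij, hkl] <;> ring
  rw [hsplit, vecMul_add, tensorSum_vecMul_kronecker, tensorSum_vecMul_kronecker]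
  ext q
  simp only [tensorSum, Pi.add_apply, ← Finset.sum_add_distrib]
  refine Finset.sum_congr rfl fun a ha => ?_
  rw [hv a ha, vecMul_one, show s • 1 - (E + a • H) = (s • 1 - E) + a • -H by module,
    vecMul_add, vecMul_smul]
  simp only [Pi.add_apply, Pi.smul_apply, smul_eq_mul]
  ring

theorem eq_zero_of_tensorSum_eq_zero [CommRing R] {S : Finset α} {v : α → ι → R}
    {η : α → κ → R} (hv : LinearIndependent R (fun a : S => v a)) (h : tensorSum S v η = 0) :
    ∀ a ∈ S, η a = 0 := by
  intro a ha
  ext k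
  refine Fintype.linearIndependent_iff.mp hv (fun b => η b k) (funext fun i => ?_) ⟨a, ha⟩
  simp only [Finset.sum_apply, Pi.smul_apply, smul_eq_mul, Pi.zero_apply]
  rw [Finset.sum_coe_sort S (fun b => η b k * v b i)]
  simpa [tensorSum, mul_comm] using congrFun h (i, k)

theorem exists_tensorSum_eq [Field R] [Fintype ι] {S : Finset α} {v : α → ι → R}
    (hv : LinearIndependent R (fun a : S => v a)) (hcard : S.card = Fintype.card ι)
    (V : ι × κ → R) : ∃ ξ, tensorSum S v ξ = V := by
  classical
  have hspan := hv.span_eq_top_of_card_eq_finrank' (by simpa using hcard)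
  choose g hg using fun k => (Submodule.mem_span_range_iff_exists_fun R).mp
    (hspan ▸ Submodule.mem_top (x := fun i => V (i, k)))
  refine ⟨fun a k => if h : a ∈ S then g k ⟨a, h⟩ else 0, funext fun ⟨i, k⟩ => ?_⟩
  rw [← congrFun (hg k) i, tensorSum, ← Finset.sum_coe_sort]
  simp [mul_comm]

theorem linearIndependent_of_vecMul_eq_smul [Field R] [Fintype ι] {W : Matrix ι ι R}
    {S : Finset R} {v : R → ι → R} (hv0 : ∀ a ∈ S, v a ≠ 0) (hv : ∀ a ∈ S, v a ᵥ* W = a • v a) :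
    LinearIndependent R (fun a : S => v a) :=
  Module.End.eigenvectors_linearIndependent' W.vecMulLinear (fun a : S => (a : R))
    Subtype.coe_injective _ fun a =>
      Module.End.hasEigenvector_iff.mpr ⟨Module.End.mem_eigenspace_iff.mpr (hv a a.2), hv0 a a.2⟩

theorem pbh_kronecker_of_eigenbasis {r : Type*} [Fintype ι] [DecidableEq ι] [Fintype κ]
    [DecidableEq κ] [Fintype r] {W : Matrix ι ι ℂ} {E H : Matrix κ κ ℂ}
    {Ψ : Matrix (ι × κ) r ℂ} {S : Finset ℂ} {v : ℂ → ι → ℂ} (hv0 : ∀ a ∈ S, v a ≠ 0)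
    (hv : ∀ a ∈ S, v a ᵥ* W = a • v a) (hcard : S.card = Fintype.card ι)
    (hΨ : ∀ (s : ℂ) (ξ : ℂ → κ → ℂ), (∀ a ∈ S, ξ a ᵥ* (s • 1 - (E + a • H)) = 0) →
      (∃ a ∈ S, ξ a ≠ 0) → tensorSum S v ξ ᵥ* Ψ ≠ 0) :
    PBH ((1 : Matrix ι ι ℂ) ⊗ₖ E + W ⊗ₖ H) Ψ := by
  intro s V hV hVΨ
  have hli := linearIndependent_of_vecMul_eq_smul hv0 hv
  obtain ⟨ξ, rfl⟩ := exists_tensorSum_eq hli hcard V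
  rw [tensorSum_vecMul_sub_kronecker hv] at hV
  by_cases hξ : ∃ a ∈ S, ξ a ≠ 0
  · exact absurd hVΨ (hΨ s ξ (eq_zero_of_tensorSum_eq_zero hli hV) hξ)
  · push Not at hξ
    ext q
    exact Finset.sum_eq_zero fun a ha => by simp [hξ a ha]

end NetworkPBH

theorem cpx_phis {n m N : ℕ} (A : Matrix (Fin n) (Fin n) ℝ) (H : Matrix (Fin n) (Fin m) ℝ)
    (C : Matrix (Fin m) (Fin n) ℝ) (W : Matrix (Fin N) (Fin N) ℝ) (h : ℝ) :
    cpx (Phis A H C W h) = 1 ⊗ₖ cpx (mexp (h • A)) + cpx W ⊗ₖ cpx (sampH A H C h) := by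
  ext ⟨i, k⟩ ⟨j, l⟩
  by_cases hij : i = j <;> simp [cpx, Phis, one_apply, hij]

theorem cpx_eq_cycleMatrix {N : ℕ} {W : Matrix (Fin (N + 1)) (Fin (N + 1)) ℝ}
    {w : Fin (N + 1) → ℝ}
    (hW : ∀ i j : Fin (N + 1), W i j = if (i : ℕ) = ((j : ℕ) + 1) % (N + 1) then w j else 0) :
    cpx W = cycleMatrix fun j => (w j : ℂ) := by
  ext i j
  by_cases hij : (i : ℕ) = ((j : ℕ) + 1) % (N + 1) <;>
    simp [cpx, cycleMatrix, hW, hij, Fin.ext_iff, Fin.val_add]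

theorem stmt12_general
    (n m p N : ℕ) (hN : 0 < N)
    (h : ℝ)
    (A : Matrix (Fin n) (Fin n) ℝ) (B : Matrix (Fin n) (Fin p) ℝ)
    (C : Matrix (Fin m) (Fin n) ℝ) (H : Matrix (Fin n) (Fin m) ℝ)
    (W : Matrix (Fin N) (Fin N) ℝ)
    (w : Fin N → ℝ) (hw : ∀ j, w j ≠ 0)
    (hW : ∀ i j : Fin N, W i j = if (i : ℕ) = ((j : ℕ) + 1) % N then w j else 0)
    (cond3 : ∀ θ : ℂ, ∀ v : ℂ → Fin N → ℂ, ∀ ξ : ℂ → Fin n → ℂ,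
      (∀ μ ∈ ((cpx W).charpoly.roots.toFinset), v μ ≠ 0) →
      (∀ μ ∈ ((cpx W).charpoly.roots.toFinset), v μ ᵥ* cpx W = μ • v μ) →
      (∀ μ ∈ ((cpx W).charpoly.roots.toFinset),
        ξ μ ᵥ* (θ • (1 : Matrix (Fin n) (Fin n) ℂ) - Emat A H C h μ) = 0) →
      (∃ μ ∈ ((cpx W).charpoly.roots.toFinset), ξ μ ≠ 0) →
      (fun q : Fin N × Fin n => ∑ μ ∈ ((cpx W).charpoly.roots.toFinset), v μ q.1 * ξ μ q.2) ᵥ*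
        cpx (Matrix.diagonal (fun i : Fin N => if (i : ℕ) = 0 then (1 : ℝ) else 0) ⊗ₖ
          sampB A B h) ≠ 0) :
    ((cpx W).charpoly.roots.toFinset.card = N ∧
      (∀ μ ∈ ((cpx W).charpoly.roots.toFinset), ∀ v1 v2 : Fin N → ℂ, v1 ≠ 0 →
        v1 ᵥ* cpx W = μ • v1 → v2 ᵥ* cpx W = μ • v2 → ∃ c : ℂ, v2 = c • v1)) ∧
    Controllable (Phis A H C W h)
      (Matrix.diagonal (fun i : Fin N => if (i : ℕ) = 0 then (1 : ℝ) else 0) ⊗ₖ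
        sampB A B h) := by
  obtain ⟨N, rfl⟩ := Nat.exists_eq_add_one_of_ne_zero hN.ne'
  have hc : ∀ j, (w j : ℂ) ≠ 0 := fun j => Complex.ofReal_ne_zero.mpr (hw j)
  have hWc := cpx_eq_cycleMatrix hW
  have hroots : (cpx W).charpoly.roots.toFinset = nthRootsFinset (N + 1) (∏ j, (w j : ℂ)) := by
    rw [hWc, roots_charpoly_cycleMatrix hc]
  have heig : ∀ μ ∈ (cpx W).charpoly.roots.toFinset,
      cycleEigvec (fun j => (w j : ℂ)) μ ᵥ* cpx W = μ • cycleEigvec (fun j => (w j : ℂ)) μ := by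
    intro μ hμ
    rw [hroots, mem_nthRootsFinset N.succ_pos] at hμ
    rw [hWc, cycleEigvec_vecMul hc hμ]
  have hcard : (cpx W).charpoly.roots.toFinset.card = N + 1 := by
    rw [hroots, Complex.card_nthRootsFinset N.succ_ne_zero
      (Finset.prod_ne_zero_iff.mpr fun j _ => hc j)]
  refine ⟨⟨hcard, fun μ _ v1 v2 hv1 h1 h2 => ?_⟩, ?_⟩
  · rw [hWc] at h1 h2
    exact exists_eq_smul_of_vecMul_cycleMatrix hc hv1 h1 h2
  · refine Controllable.of_pbh_cpx ?_
    rw [cpx_phis]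
    refine pbh_kronecker_of_eigenbasis (fun μ _ => cycleEigvec_ne_zero μ) heig
      (by simpa using hcard) fun s ξ hξ hne =>
        cond3 s _ ξ (fun μ _ => cycleEigvec_ne_zero μ) heig hξ hne

theorem stmt12
    (n m p N : ℕ) (hn : 0 < n) (hm : 0 < m) (hp : 0 < p) (hN : 0 < N)
    (h : ℝ) (hh : 0 < h)
    (A : Matrix (Fin n) (Fin n) ℝ) (B : Matrix (Fin n) (Fin p) ℝ)
    (C : Matrix (Fin m) (Fin n) ℝ) (H : Matrix (Fin n) (Fin m) ℝ)
    (W : Matrix (Fin N) (Fin N) ℝ)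
    (hN2 : 2 ≤ N) (w : Fin N → ℝ) (hw : ∀ j, w j ≠ 0)
    (hW : ∀ i j : Fin N, W i j = if (i : ℕ) = ((j : ℕ) + 1) % N then w j else 0)
    (cond2 : ∀ μ ∈ ((cpx W).charpoly.roots.toFinset),
      PBH (Emat A H C h μ) (cpx (sampB A B h)))
    (cond3 : ∀ θ : ℂ, ∀ v : ℂ → Fin N → ℂ, ∀ ξ : ℂ → Fin n → ℂ,
      (∀ μ ∈ ((cpx W).charpoly.roots.toFinset), v μ ≠ 0) →
      (∀ μ ∈ ((cpx W).charpoly.roots.toFinset), v μ ᵥ* cpx W = μ • v μ) →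
      (∀ μ ∈ ((cpx W).charpoly.roots.toFinset),
        ξ μ ᵥ* (θ • (1 : Matrix (Fin n) (Fin n) ℂ) - Emat A H C h μ) = 0) →
      (∃ μ ∈ ((cpx W).charpoly.roots.toFinset), ξ μ ≠ 0) →
      (fun q : Fin N × Fin n => ∑ μ ∈ ((cpx W).charpoly.roots.toFinset), v μ q.1 * ξ μ q.2) ᵥ*
        cpx (Matrix.diagonal (fun i : Fin N => if (i : ℕ) = 0 then (1 : ℝ) else 0) ⊗ₖ
          sampB A B h) ≠ 0) :
    ((cpx W).charpoly.roots.toFinset.card = N ∧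
      (∀ μ ∈ ((cpx W).charpoly.roots.toFinset), ∀ v1 v2 : Fin N → ℂ, v1 ≠ 0 →
        v1 ᵥ* cpx W = μ • v1 → v2 ᵥ* cpx W = μ • v2 → ∃ c : ℂ, v2 = c • v1)) ∧
    Controllable (Phis A H C W h)
      (Matrix.diagonal (fun i : Fin N => if (i : ℕ) = 0 then (1 : ℝ) else 0) ⊗ₖ
        sampB A B h) :=
  stmt12_general n m p N hN h A B C H W w hw hW cond3
end
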